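/- Fix n ≥ 1, let p : 2^n → ℝ be a probability vector with p(σ) > 0 for every σ ∈ 2^n and Σ_{σ∈2^n} p(σ) = 1, let μ_p be the associated n-step Bernoulli measure on 2^ω, and let φ : 2^{<ω} → 2^{<ω} be a non-trivial n-block map. Then μ_p({X ∈ 2^ω : |φ(X↾m)| → ∞ as m → ∞}) = 1; that is, the Turing functional induced by φ is μ_p-almost total. -/

import Mathlib

/-!
Cut `X` into consecutive blocks of length `n`. By the block-map property, `|φ(X↾m)|` is the sum
of `|φ(b)|` over the `⌊m/n⌋` complete blocks `b` of `X↾m`, so it diverges unless, from some block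
on, every block lies in the set `B` of blocks that `φ` sends to `[]`. Non-triviality and
positivity of `p` give `p(B) < 1`, and under `μ_p` the blocks are independent with law `p`,
so the probability that the blocks `k, …, k + m - 1` all lie in `B` is at most `p(B)^m → 0`.
-/

open Filter MeasureTheory

/-- The length-`m` initial segment of `X ∈ 2^ω`, as a finite binary string. -/
def seg (X : ℕ → Bool) (m : ℕ) : List Bool := (List.range m).map X

/-- The cylinder `⟦σ⟧` of all sequences extending the string `σ`. -/
def cyl (σ : List Bool) : Set (ℕ → Bool) := {X | seg X σ.length = σ}

/-- `μ` is the `n`-step Bernoulli measure attached to the probability vector `p`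
on `2^n`: the measure of the cylinder of a concatenation of length-`n` blocks is
the product of the `p`-values of the blocks. -/
def IsNStepBernoulli (n : ℕ) (p : (Fin n → Bool) → ℝ)
    (μ : Measure (ℕ → Bool)) : Prop :=
  ∀ (k : ℕ) (σs : Fin k → (Fin n → Bool)),
    μ (cyl (List.ofFn (fun i => List.ofFn (σs i))).flatten) =
      ∏ i, ENNReal.ofReal (p (σs i))

/-- `φ` is an `n`-block map: its value on `σ₁⌢⋯⌢σ_k⌢τ` (each `|σᵢ| = n`, `|τ| < n`)
is `φ(σ₁)⌢⋯⌢φ(σ_k)`. -/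
def IsNBlockMap (n : ℕ) (φ : List Bool → List Bool) : Prop :=
  ∀ (σs : List (Fin n → Bool)) (τ : List Bool), τ.length < n →
    φ ((σs.map List.ofFn).flatten ++ τ) = (σs.map (fun f => φ (List.ofFn f))).flatten

def block (n : ℕ) (X : ℕ → Bool) (i : ℕ) : Fin n → Bool := fun j => X (i * n + j)

section Blocks

variable {n : ℕ}

lemma seg_add (X : ℕ → Bool) (a b : ℕ) :
    seg X (a + b) = seg X a ++ (List.range b).map (fun j => X (a + j)) := by
  simp [seg, List.range_add, List.map_map, Function.comp]

lemma ofFn_block (X : ℕ → Bool) (i : ℕ) :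
    List.ofFn (block n X i) = (List.range n).map (fun j => X (i * n + j)) :=
  List.ext_getElem (by simp) fun _ _ _ => by simp [block]

lemma seg_mul_eq_flatten_block (X : ℕ → Bool) (K : ℕ) :
    seg X (K * n) = (List.ofFn fun i : Fin K => List.ofFn (block n X i)).flatten := by
  induction K with
  | zero => simp [seg]
  | succ K ih =>
    rw [Nat.succ_mul, seg_add, ih, List.ofFn_succ', List.concat_eq_append,
      List.flatten_concat, ofFn_block]
    rfl

lemma length_flatten_ofFn_ofFn {K : ℕ} (σs : Fin K → Fin n → Bool) :
    (List.ofFn fun i => List.ofFn (σs i)).flatten.length = K * n := by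
  simp [List.length_flatten, List.map_ofFn, Function.comp, List.sum_ofFn, mul_comm]

lemma mem_cyl_flatten_block (X : ℕ → Bool) (K : ℕ) :
    X ∈ cyl (List.ofFn fun i : Fin K => List.ofFn (block n X i)).flatten := by
  change seg X _ = _
  rw [length_flatten_ofFn_ofFn, seg_mul_eq_flatten_block]

lemma IsNBlockMap.length_seg {φ : List Bool → List Bool} (hφ : IsNBlockMap n φ) (hn : 1 ≤ n)
    (X : ℕ → Bool) (m : ℕ) :
    (φ (seg X m)).length = ∑ i ∈ Finset.range (m / n), (φ (List.ofFn (block n X i))).length := by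
  have hseg : seg X m = ((List.ofFn fun i : Fin (m / n) => block n X i).map List.ofFn).flatten ++
      (List.range (m % n)).map (fun j => X (m / n * n + j)) := by
    conv_lhs => rw [← Nat.div_add_mod' m n]
    rw [seg_add, seg_mul_eq_flatten_block, List.map_ofFn]
    rfl
  rw [hseg, hφ _ _ (by simpa using Nat.mod_lt m hn), List.length_flatten, List.map_map,
    List.map_ofFn, List.sum_ofFn, ← Fin.sum_univ_eq_sum_range]
  rfl

end Blocks

lemma tendsto_sum_range_of_frequently_ne_zero {a : ℕ → ℕ} (ha : ∃ᶠ i in atTop, a i ≠ 0) :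
    Tendsto (fun K => ∑ i ∈ Finset.range K, a i) atTop atTop := by
  have hmono : Monotone fun K => ∑ i ∈ Finset.range K, a i := fun _ _ h =>
    Finset.sum_le_sum_of_subset (Finset.range_subset_range.2 h)
  refine tendsto_atTop_atTop_of_monotone hmono fun b => ?_
  induction b with
  | zero => exact ⟨0, Nat.zero_le _⟩
  | succ b ih =>
    obtain ⟨K, hK⟩ := ih
    obtain ⟨i, hKi, hi⟩ := frequently_atTop.1 ha K
    refine ⟨i + 1, ?_⟩
    have hKi' : ∑ j ∈ Finset.range K, a j ≤ ∑ j ∈ Finset.range i, a j := hmono hKi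
    rw [Finset.sum_range_succ]
    omega

lemma IsNBlockMap.tendsto_length_seg {n : ℕ} {φ : List Bool → List Bool} (hφ : IsNBlockMap n φ)
    (hn : 1 ≤ n) {X : ℕ → Bool} (hX : ∃ᶠ i in atTop, φ (List.ofFn (block n X i)) ≠ []) :
    Tendsto (fun m => (φ (seg X m)).length) atTop atTop := by
  have hfreq : ∃ᶠ i in atTop, (φ (List.ofFn (block n X i))).length ≠ 0 := by
    simpa using hX
  rw [funext (hφ.length_seg hn X)]
  exact (tendsto_sum_range_of_frequently_ne_zero hfreq).comp
    (Nat.tendsto_div_const_atTop (by omega))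

section Bernoulli

variable {n : ℕ} {p : (Fin n → Bool) → ℝ} {μ : Measure (ℕ → Bool)}

lemma IsNStepBernoulli.measure_forall_block_mem_le (hμ : IsNStepBernoulli n p μ) {K : ℕ}
    (t : Fin K → Finset (Fin n → Bool)) :
    μ {X | ∀ i : Fin K, block n X i ∈ t i} ≤ ∏ i, ∑ f ∈ t i, ENNReal.ofReal (p f) := by
  have hcover : {X | ∀ i : Fin K, block n X i ∈ t i} ⊆
      ⋃ σs ∈ Fintype.piFinset t, cyl (List.ofFn fun i => List.ofFn (σs i)).flatten :=
    fun X hX => Set.mem_biUnion (Fintype.mem_piFinset.2 hX) (mem_cyl_flatten_block X K)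
  calc μ {X | ∀ i : Fin K, block n X i ∈ t i}
      ≤ ∑ σs ∈ Fintype.piFinset t, μ (cyl (List.ofFn fun i => List.ofFn (σs i)).flatten) :=
        (measure_mono hcover).trans (measure_biUnion_finset_le _ _)
    _ = ∑ σs ∈ Fintype.piFinset t, ∏ i, ENNReal.ofReal (p (σs i)) :=
        Finset.sum_congr rfl fun σs _ => hμ K σs
    _ = ∏ i, ∑ f ∈ t i, ENNReal.ofReal (p f) :=
        (Finset.prod_univ_sum t fun _ f => ENNReal.ofReal (p f)).symm

lemma IsNStepBernoulli.measure_forall_ge_block_mem_le_pow (hμ : IsNStepBernoulli n p μ)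
    (hp : ∀ f, 0 ≤ p f) (hp1 : ∑ f, p f = 1) (B : Finset (Fin n → Bool)) (k m : ℕ) :
    μ {X | ∀ i, k ≤ i → block n X i ∈ B} ≤ ENNReal.ofReal (∑ f ∈ B, p f) ^ m := by
  set t : Fin (k + m) → Finset (Fin n → Bool) := Fin.append (fun _ => Finset.univ) fun _ => B
  have hsub : {X | ∀ i, k ≤ i → block n X i ∈ B} ⊆ {X | ∀ i, block n X i ∈ t i} := by
    intro X hX i
    induction i using Fin.addCases with
    | left i => simp [t]
    | right j => simpa [t] using hX _ (Nat.le_add_right k j)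
  calc μ {X | ∀ i, k ≤ i → block n X i ∈ B}
      ≤ ∏ i, ∑ f ∈ t i, ENNReal.ofReal (p f) :=
        (measure_mono hsub).trans (hμ.measure_forall_block_mem_le t)
    _ = ENNReal.ofReal (∑ f ∈ B, p f) ^ m := by
        have hone : ∑ f, ENNReal.ofReal (p f) = 1 := by
          rw [← ENNReal.ofReal_sum_of_nonneg fun f _ => hp f, hp1, ENNReal.ofReal_one]
        simp [t, Fin.prod_univ_add, ENNReal.ofReal_sum_of_nonneg fun f _ => hp f, hone]

lemma IsNStepBernoulli.measure_eventually_block_mem_eq_zero (hμ : IsNStepBernoulli n p μ)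
    (hp : ∀ f, 0 ≤ p f) (hp1 : ∑ f, p f = 1) {B : Finset (Fin n → Bool)}
    (hB : ∑ f ∈ B, p f < 1) :
    μ {X | ∀ᶠ i in atTop, block n X i ∈ B} = 0 := by
  have hq : ENNReal.ofReal (∑ f ∈ B, p f) < 1 := by
    simpa using ENNReal.ofReal_lt_ofReal_iff_of_nonneg (Finset.sum_nonneg fun f _ => hp f) |>.2 hB
  have htail (k : ℕ) : μ {X | ∀ i, k ≤ i → block n X i ∈ B} = 0 :=
    le_antisymm (ge_of_tendsto' (ENNReal.tendsto_pow_atTop_nhds_zero_of_lt_one hq)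
      (hμ.measure_forall_ge_block_mem_le_pow hp hp1 B k)) zero_le
  have hunion :
      {X | ∀ᶠ i in atTop, block n X i ∈ B} = ⋃ k, {X | ∀ i, k ≤ i → block n X i ∈ B} := by
    ext X
    simp [eventually_atTop]
  rw [hunion]
  exact measure_iUnion_null htail

end Bernoulli

/-- For a positive probability vector `p` on `2^n`, the associated `n`-step
Bernoulli measure `μ_p`, and a non-trivial `n`-block map `φ`, the induced
functional is `μ_p`-almost total: `μ_p {X : |φ(X↾m)| → ∞} = 1`. -/
theorem stmt6 (n : ℕ) (hn : 1 ≤ n) (p : (Fin n → Bool) → ℝ)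
    (hp : ∀ f : Fin n → Bool, 0 < p f) (hp1 : ∑ f : Fin n → Bool, p f = 1)
    (μ : Measure (ℕ → Bool)) [IsProbabilityMeasure μ]
    (hμ : IsNStepBernoulli n p μ)
    (φ : List Bool → List Bool) (hφ : IsNBlockMap n φ)
    (hnt : ∃ f : Fin n → Bool, φ (List.ofFn f) ≠ []) :
    μ {X : ℕ → Bool | Tendsto (fun m => (φ (seg X m)).length) atTop atTop} = 1 := by
  obtain ⟨f₀, hf₀⟩ := hnt
  set B := Finset.univ.filter fun f : Fin n → Bool => φ (List.ofFn f) = []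
  have hB : ∑ f ∈ B, p f < 1 := hp1 ▸ Finset.sum_lt_sum_of_subset (Finset.subset_univ B)
    (Finset.mem_univ f₀) (by simp [B, hf₀]) (hp f₀) fun f _ _ => (hp f).le
  have hnull := hμ.measure_eventually_block_mem_eq_zero (fun f => (hp f).le) hp1 hB
  have hae : ∀ᵐ X ∂μ, Tendsto (fun m => (φ (seg X m)).length) atTop atTop := by
    refine measure_mono_null (fun X hX => ?_) hnull
    by_contra hXB
    exact hX <| hφ.tendsto_length_seg hn <|
      (not_eventually.1 hXB).mono fun i hi => by simpa [B] using hi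
  rw [measure_congr (ae_eq_univ.2 hae), measure_univ]
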